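/- arXiv:1806.05601 — 5 statements merged into one kernel-verified Lean document; each statement's English description precedes it below -/
import Mathlib

section
/- For positive integers K, M with M ≤ K and M not dividing K, the gap between the two thresholds satisfies K/gcd(K,M) − (M/gcd(K,M) − 1)(⌊K/M⌋ − 1) − ⌈K/M⌉ < 2M/gcd(K,M) − 1. -/
theorem pid_threshold_gap (K M : ℕ) (hM : 0 < M) (hMK : M ≤ K) (hndvd : ¬ M ∣ K) :
    (K : ℚ) / (Nat.gcd K M : ℚ)
      - ((M : ℚ) / (Nat.gcd K M : ℚ) - 1) * ((⌊(K : ℚ) / (M : ℚ)⌋ : ℚ) - 1)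
      - (⌈(K : ℚ) / (M : ℚ)⌉ : ℚ)
    < 2 * (M : ℚ) / (Nat.gcd K M : ℚ) - 1 := by
  have hK : 0 < K := lt_of_lt_of_le hM hMK
  have hg : 0 < Nat.gcd K M := Nat.gcd_pos_of_pos_left M hK
  set q := K / M with hq
  have hMQ : (0:ℚ) < (M:ℚ) := by exact_mod_cast hM
  have hgQ : (0:ℚ) < (Nat.gcd K M : ℚ) := by exact_mod_cast hg
  -- bounds on K
  have hmod := Nat.div_add_mod K M
  have hr : K % M ≠ 0 := fun h => hndvd (Nat.dvd_of_mod_eq_zero h)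
  have hrM : K % M < M := Nat.mod_lt K hM
  have h1 : M * q < K := by rw [hq]; omega
  have h2 : K < M * (q + 1) := by rw [hq, Nat.mul_add, Nat.mul_one]; omega
  have h1Q : (M:ℚ) * q < K := by exact_mod_cast h1
  have h2Q : (K:ℚ) < M * (q + 1) := by exact_mod_cast h2
  have hfloor : ⌊(K : ℚ) / (M : ℚ)⌋ = (q : ℤ) := by
    rw [Int.floor_eq_iff]
    constructor
    · rw [le_div_iff₀ hMQ]
      push_cast
      nlinarith
    · rw [div_lt_iff₀ hMQ]
      push_cast
      nlinarith
  have hceil : ⌈(K : ℚ) / (M : ℚ)⌉ = (q : ℤ) + 1 := by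
    rw [Int.ceil_eq_iff]
    constructor
    · rw [lt_div_iff₀ hMQ]
      push_cast
      nlinarith
    · rw [div_le_iff₀ hMQ]
      push_cast
      nlinarith
  rw [hfloor, hceil]
  push_cast
  have key : (K:ℚ) < (M:ℚ)*((q:ℚ)+1) + (Nat.gcd K M : ℚ) := by nlinarith
  rw [div_eq_mul_inv, div_eq_mul_inv, mul_div_assoc, div_eq_mul_inv]
  set t := (Nat.gcd K M : ℚ)⁻¹ with htdef
  have ht : (Nat.gcd K M : ℚ) * t = 1 := mul_inv_cancel₀ (ne_of_gt hgQ)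
  have ht' : 0 < t := inv_pos.mpr hgQ
  have hint : 0 < t * ((M:ℚ)*((q:ℚ)+1) + (Nat.gcd K M : ℚ) - K) :=
    mul_pos ht' (by linarith)
  nlinarith [hint, ht]
end

section
/- For positive integers K, M with M ≤ K and M not dividing K, the threshold satisfies K/gcd(K,M) − (M/gcd(K,M) − 1)(⌊K/M⌋ − 1) > ⌈K/M⌉, i.e., the intermediate regime thresholds are strictly ordered. -/
theorem pid_thresholds_ordered (K M : ℕ) (hM : 0 < M) (hMK : M ≤ K) (hndvd : ¬ M ∣ K) :
    (K : ℚ) / (Nat.gcd K M : ℚ)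
      - ((M : ℚ) / (Nat.gcd K M : ℚ) - 1) * ((⌊(K : ℚ) / (M : ℚ)⌋ : ℚ) - 1)
    > (⌈(K : ℚ) / (M : ℚ)⌉ : ℚ) := by
  set g := Nat.gcd K M with hgdef
  have hK : 0 < K := lt_of_lt_of_le hM hMK
  have hg : 0 < g := Nat.gcd_pos_of_pos_left M hK
  have hgK : g ∣ K := Nat.gcd_dvd_left K M
  have hgM : g ∣ M := Nat.gcd_dvd_right K M
  set q := K / M with hqdef
  have hq1 : 1 ≤ q := Nat.one_le_div_iff hM |>.2 hMK
  have hfloor : ⌊(K:ℚ)/(M:ℚ)⌋ = (q : ℤ) := Rat.floor_natCast_div_natCast K M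
  set r := K % M with hrdef
  have hKe : M * q + r = K := Nat.div_add_mod K M
  have hr0 : r ≠ 0 := fun h => hndvd (Nat.dvd_of_mod_eq_zero h)
  have hr1 : 1 ≤ r := Nat.one_le_iff_ne_zero.2 hr0
  have hrM : r < M := Nat.mod_lt K hM
  have hgr : g ∣ r := by
    have : r = K - M * q := by omega
    rw [this]
    exact Nat.dvd_sub hgK (hgM.mul_right q)
  have hgr' : g ≤ r := Nat.le_of_dvd (Nat.pos_of_ne_zero hr0) hgr
  have hM2g : 2 * g ≤ M := by
    obtain ⟨m, hm⟩ := hgM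
    have hm1 : m ≠ 1 := by
      rintro rfl
      exact hndvd (hm ▸ (by simpa using hgK))
    have hm0 : m ≠ 0 := by rintro rfl; simp at hm; omega
    have : 2 ≤ m := by omega
    calc 2 * g = g * 2 := by ring
    _ ≤ g * m := Nat.mul_le_mul_left g this
    _ = M := hm.symm
  have hceil : ⌈(K:ℚ)/(M:ℚ)⌉ = (q : ℤ) + 1 := by
    rw [Int.ceil_eq_iff]
    have hMq : (0:ℚ) < (M:ℚ) := by exact_mod_cast hM
    constructor
    · push_cast
      rw [lt_div_iff₀ hMq]
      have : M * q + 1 ≤ K := by omega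
      calc ((q:ℚ) + 1 - 1) * M = (M * q : ℕ) := by push_cast; ring
      _ < K := by exact_mod_cast (by omega : M * q < K)
    · push_cast
      rw [div_le_iff₀ hMq]
      have : K ≤ M * q + M := by omega
      calc (K:ℚ) = ((M * q + r : ℕ) : ℚ) := by rw [hKe]
      _ ≤ ((M * q + M : ℕ) : ℚ) := by exact_mod_cast (by omega : M * q + r ≤ M * q + M)
      _ = ((q:ℚ) + 1) * M := by push_cast; ring
  have hgQ : (0:ℚ) < (g:ℚ) := by exact_mod_cast hg
  rw [hfloor, hceil]
  push_cast
  rw [gt_iff_lt, ← sub_pos]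
  have key : ((K:ℚ) / g - ((M:ℚ)/g - 1) * ((q:ℚ) - 1) - ((q:ℚ) + 1)) * g
      = (K:ℚ) - ((M:ℚ) - g) * ((q:ℚ) - 1) - ((q:ℚ) + 1) * g := by
    field_simp
  have hpos : (0:ℚ) < (K:ℚ) - ((M:ℚ) - g) * ((q:ℚ) - 1) - ((q:ℚ) + 1) * g := by
    have hKQ : (K:ℚ) = (M:ℚ) * q + r := by exact_mod_cast hKe.symm
    have h1 : (g:ℚ) ≤ (r:ℚ) := by exact_mod_cast hgr'
    have h2 : 2 * (g:ℚ) ≤ (M:ℚ) := by exact_mod_cast hM2g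
    have h3 : (1:ℚ) ≤ (q:ℚ) := by exact_mod_cast hq1
    nlinarith
  have := (mul_pos_iff_of_pos_right hgQ).1 (key ▸ hpos)
  linarith
end

section
/- Let H = [V; −I_{K̄−L}] be a K̄×(K̄−L) matrix over a field, where V is an L×(K̄−L) Cauchy matrix with distinct parameters. Then any (K̄−L) rows of H are linearly independent, i.e., every (K̄−L)×(K̄−L) submatrix of H formed by selecting K̄−L rows is invertible. -/
open Polynomial Finset

-- Cauchy kernel lemma: a vector in the left kernel of a (possibly wide) Cauchy matrix is zero
lemma cauchy_kernel {F : Type*} [Field F] {ι κ : Type*} [DecidableEq ι] [DecidableEq κ]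
    (S : Finset ι) (J : Finset κ) (a : ι → F) (b : κ → F)
    (ha : Set.InjOn a S) (hb : Set.InjOn b J)
    (hab : ∀ i ∈ S, ∀ j ∈ J, a i ≠ b j)
    (hcard : S.card ≤ J.card) (c : ι → F)
    (hc : ∀ j ∈ J, ∑ i ∈ S, c i * (a i - b j)⁻¹ = 0) :
    ∀ i ∈ S, c i = 0 := by
  set P : F[X] := ∑ i ∈ S, Polynomial.C (c i) * ∏ i' ∈ S.erase i, (Polynomial.X - Polynomial.C (a i')) with hP
  have hdeg : P.degree < (J.card : WithBot ℕ) := by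
    apply lt_of_le_of_lt (Polynomial.degree_sum_le _ _)
    rw [Finset.sup_lt_iff (by exact_mod_cast WithBot.bot_lt_coe _)]
    intro i hi
    apply lt_of_le_of_lt (Polynomial.degree_mul_le _ _)
    have h1 : (Polynomial.C (c i)).degree ≤ 0 := Polynomial.degree_C_le
    have h2 : (∏ i' ∈ S.erase i, (Polynomial.X - Polynomial.C (a i'))).degree
        ≤ ((S.erase i).card : WithBot ℕ) := by
      apply le_trans (Polynomial.degree_prod_le _ _)
      calc ∑ i' ∈ S.erase i, (Polynomial.X - Polynomial.C (a i')).degree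
          ≤ ∑ _i' ∈ S.erase i, (1 : WithBot ℕ) := by
            apply Finset.sum_le_sum; intro _ _; exact Polynomial.degree_X_sub_C_le _
        _ = ((S.erase i).card : WithBot ℕ) := by
            rw [Finset.sum_const, nsmul_eq_mul, mul_one]
    have h3 : ((S.erase i).card : WithBot ℕ) < (J.card : WithBot ℕ) := by
      have : (S.erase i).card < S.card := Finset.card_erase_lt_of_mem hi
      exact_mod_cast lt_of_lt_of_le this hcard
    calc (Polynomial.C (c i)).degree + _ ≤ 0 + ((S.erase i).card : WithBot ℕ) :=
          add_le_add h1 h2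
      _ = ((S.erase i).card : WithBot ℕ) := by rw [zero_add]
      _ < _ := h3
  have heval : ∀ j ∈ J, P.eval (b j) = 0 := by
    intro j hj
    have h0 := hc j hj
    have key : ∀ i ∈ S, c i * ∏ i' ∈ S.erase i, (b j - a i')
        = -(c i * (a i - b j)⁻¹) * ∏ i' ∈ S, (b j - a i') := by
      intro i hi
      rw [← Finset.prod_erase_mul S _ hi]
      have hne : a i - b j ≠ 0 := sub_ne_zero.mpr (hab i hi j hj)
      field_simp
      ring
    have : P.eval (b j) = ∑ i ∈ S, c i * ∏ i' ∈ S.erase i, (b j - a i') := by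
      simp [hP, Polynomial.eval_finset_sum, Polynomial.eval_prod]
    rw [this, Finset.sum_congr rfl key, ← Finset.sum_mul,
      Finset.sum_neg_distrib, h0, neg_zero, zero_mul]
  have hP0 : P = 0 :=
    Polynomial.eq_zero_of_degree_lt_of_eval_index_eq_zero J hb (by simpa using hdeg) heval
  intro i hi
  have hev : P.eval (a i) = c i * ∏ i' ∈ S.erase i, (a i - a i') := by
    have : P.eval (a i) = ∑ i' ∈ S, c i' * ∏ i'' ∈ S.erase i', (a i - a i'') := by
      simp [hP, Polynomial.eval_finset_sum, Polynomial.eval_prod]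
    rw [this]
    apply Finset.sum_eq_single_of_mem i hi
    intro i' hi' hne
    have : ∏ i'' ∈ S.erase i', (a i - a i'') = 0 :=
      Finset.prod_eq_zero (Finset.mem_erase.mpr ⟨hne.symm, hi⟩) (by ring)
    rw [this, mul_zero]
  have hprod : ∏ i' ∈ S.erase i, (a i - a i') ≠ 0 := by
    apply Finset.prod_ne_zero_iff.mpr
    intro i' hi'
    obtain ⟨hne, hi'S⟩ := Finset.mem_erase.mp hi'
    exact sub_ne_zero.mpr (fun h => hne (ha hi'S hi h.symm))
  have hz : c i * ∏ i' ∈ S.erase i, (a i - a i') = 0 := by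
    rw [← hev, hP0, Polynomial.eval_zero]
  exact (mul_eq_zero.mp hz).resolve_right hprod

theorem pid_H_rows_independent (p Kb L : ℕ) (hp : p.Prime) (hpK : Kb ≤ p)
    (hL : 0 < L) (hLK : L < Kb)
    (α : Fin L → ZMod p) (β : Fin (Kb - L) → ZMod p)
    (hα : Function.Injective α) (hβ : Function.Injective β)
    (hαβ : ∀ i j, α i ≠ β j)
    (V : Matrix (Fin L) (Fin (Kb - L)) (ZMod p))
    (hV : ∀ i j, V i j = (α i - β j)⁻¹)
    (H : Matrix (Fin L ⊕ Fin (Kb - L)) (Fin (Kb - L)) (ZMod p))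
    (hH : H = Matrix.fromRows V (-1))
    (r : Fin (Kb - L) → (Fin L ⊕ Fin (Kb - L)))
    (hr : Function.Injective r) :
    IsUnit (Matrix.of (fun i j => H (r i) j) : Matrix (Fin (Kb - L)) (Fin (Kb - L)) (ZMod p)).det := by
  haveI : Fact p.Prime := ⟨hp⟩
  have hnpos : 0 < Kb - L := by omega
  rw [isUnit_iff_ne_zero]
  intro hdet
  obtain ⟨v, hv0, hvM⟩ := Matrix.exists_vecMul_eq_zero_iff.mpr hdet
  have hveq : ∀ j, ∑ i, v i * H (r i) j = 0 := by
    intro j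
    have := congrFun hvM j
    simpa [Matrix.vecMul, dotProduct] using this
  classical
  set S : Finset (Fin (Kb - L)) := Finset.univ.filter (fun i => (r i).isLeft) with hS
  set i0 : Fin (Kb - L) := ⟨0, hnpos⟩ with hi0
  set g : Fin (Kb - L) → Fin (Kb - L) := fun i => Sum.elim (fun _ => i0) id (r i) with hg
  set a : Fin (Kb - L) → ZMod p := fun i => Sum.elim α (fun _ => (0 : ZMod p)) (r i) with ha
  set J : Finset (Fin (Kb - L)) := (Sᶜ.image g)ᶜ with hJ
  have hleft : ∀ i ∈ S, ∃ s, r i = Sum.inl s := by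
    intro i hi
    rw [hS, Finset.mem_filter] at hi
    rcases h : r i with s | t
    · exact ⟨s, rfl⟩
    · rw [h] at hi; simp at hi
  have hright : ∀ i ∉ S, r i = Sum.inr (g i) := by
    intro i hi
    rw [hS, Finset.mem_filter] at hi
    rcases h : r i with s | t
    · rw [h] at hi; simp at hi
    · simp only [hg, h, Sum.elim_inr, id]
  have hMleft : ∀ i ∈ S, ∀ j, H (r i) j = (a i - β j)⁻¹ := by
    intro i hi j
    obtain ⟨s, hs⟩ := hleft i hi
    simp only [ha, hs, hH, Sum.elim_inl, Matrix.fromRows_apply_inl, hV]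
  have hMright : ∀ i ∉ S, ∀ j, H (r i) j = -(if g i = j then 1 else 0) := by
    intro i hi j
    rw [hright i hi, hH]
    simp [Matrix.one_apply]
  have hmemJ : ∀ j, j ∈ J ↔ ∀ i ∉ S, g i ≠ j := by
    intro j
    rw [hJ]
    simp [Finset.mem_image]
  have hgInj : Set.InjOn g ↑(Sᶜ) := by
    intro i hi i' hi' hgi
    simp only [Finset.coe_compl, Set.mem_compl_iff, Finset.mem_coe] at hi hi'
    apply hr
    rw [hright i hi, hright i' hi', hgi]
  have hcardJ : J.card = S.card := by
    have h1 : (Sᶜ.image g).card = Sᶜ.card := Finset.card_image_of_injOn hgInj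
    have h2 : Sᶜ.card = (Kb - L) - S.card := by
      rw [Finset.card_compl]; simp
    have h3 : S.card ≤ Kb - L := by
      have := Finset.card_le_univ S; simpa using this
    rw [hJ, Finset.card_compl, h1, h2]
    simp
    omega
  have hvS : ∀ i ∈ S, v i = 0 := by
    apply cauchy_kernel S J a β _ _ _ (le_of_eq hcardJ.symm)
    · intro j hj
      have heq := hveq j
      rw [← Finset.sum_add_sum_compl S (fun i => v i * H (r i) j)] at heq
      have hz : ∑ i ∈ Sᶜ, v i * H (r i) j = 0 := by
        apply Finset.sum_eq_zero
        intro i hi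
        rw [Finset.mem_compl] at hi
        rw [hMright i hi j]
        have : g i ≠ j := (hmemJ j).mp hj i hi
        simp [this]
      rw [hz, add_zero] at heq
      rw [← heq]
      apply Finset.sum_congr rfl
      intro i hi
      rw [hMleft i hi j]
    · intro i hi i' hi' hai
      simp only [Finset.mem_coe] at hi hi'
      obtain ⟨s, hs⟩ := hleft i hi
      obtain ⟨s', hs'⟩ := hleft i' hi'
      simp only [ha, hs, hs', Sum.elim_inl] at hai
      apply hr
      rw [hs, hs', hα hai]
    · exact fun j hj j' hj' h => hβ h
    · intro i hi j hj
      obtain ⟨s, hs⟩ := hleft i hi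
      simp only [ha, hs, Sum.elim_inl]
      exact hαβ s j
  have hvAll : ∀ i, v i = 0 := by
    intro i
    by_cases hi : i ∈ S
    · exact hvS i hi
    · have heq := hveq (g i)
      have hsum : ∑ i', v i' * H (r i') (g i) = -v i := by
        rw [Finset.sum_eq_single_of_mem i (Finset.mem_univ i)]
        · rw [hMright i hi (g i)]; simp
        · intro i' _ hne
          by_cases hi' : i' ∈ S
          · rw [hvS i' hi']; ring
          · rw [hMright i' hi' (g i)]
            have : g i' ≠ g i := by
              intro h
              exact hne (hgInj (by simpa using hi') (by simpa using hi) h)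
            simp [this]
      rw [hsum] at heq
      exact neg_eq_zero.mp heq
  exact hv0 (funext hvAll)
end

section
/- Setting N = K/g − (M/g − 1)(⌊K/M⌋ − 1) with g = gcd(K,M) in the formula l = ⌊(N − ⌊K/M⌋ + 1)·M / (K − (⌊K/M⌋ − 1)·M)⌋ gives l = M/g, and the resulting rate l/(N + (l−1)(⌊K/M⌋−1)) equals M/K. -/
theorem pid_l_at_large_N (K M N : ℕ) (hM : 0 < M) (hMK : M ≤ K) (hndvd : ¬ M ∣ K)
    (g : ℤ) (hg : g = Nat.gcd K M)
    (hN : (N : ℚ) = (K : ℚ) / (g : ℚ)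
        - ((M : ℚ) / (g : ℚ) - 1) * ((⌊(K : ℚ) / (M : ℚ)⌋ : ℚ) - 1))
    (l : ℤ)
    (hl : l = ⌊(((N : ℚ) - (⌊(K : ℚ) / (M : ℚ)⌋ : ℚ) + 1) * (M : ℚ))
                / ((K : ℚ) - ((⌊(K : ℚ) / (M : ℚ)⌋ : ℚ) - 1) * (M : ℚ))⌋) :
    (l : ℚ) = (M : ℚ) / (g : ℚ) ∧
      (l : ℚ) / ((N : ℚ) + ((l : ℚ) - 1) * ((⌊(K : ℚ) / (M : ℚ)⌋ : ℚ) - 1))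
        = (M : ℚ) / (K : ℚ) := by
  have hK0 : (0:ℚ) < K := by exact_mod_cast lt_of_lt_of_le hM hMK
  have hM0 : (0:ℚ) < M := by exact_mod_cast hM
  set Q : ℚ := (⌊(K : ℚ) / (M : ℚ)⌋ : ℚ) with hQdef
  have hgnat : 0 < Nat.gcd K M := Nat.gcd_pos_of_pos_right _ hM
  have hg0 : (g:ℚ) ≠ 0 := by
    rw [hg]
    exact_mod_cast hgnat.ne'
  have hQle : Q * M ≤ K := by
    have h := Int.floor_le ((K:ℚ)/M)
    calc Q * M ≤ ((K:ℚ)/M) * M := mul_le_mul_of_nonneg_right h hM0.le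
      _ = K := by field_simp
  have hden : (0:ℚ) < (K:ℚ) - (Q - 1)*M := by nlinarith
  have hfrac : (((N : ℚ) - Q + 1) * M) / ((K:ℚ) - (Q-1)*M) = (M:ℚ)/(g:ℚ) := by
    rw [div_eq_div_iff hden.ne' hg0, hN]
    field_simp
    ring
  have hdvd : Nat.gcd K M ∣ M := Nat.gcd_dvd_right K M
  have hMg : (M:ℚ)/(g:ℚ) = ((M / Nat.gcd K M : ℕ) : ℚ) := by
    rw [hg, Nat.cast_div hdvd (by exact_mod_cast hgnat.ne')]
    push_cast
    ring
  have hl' : l = ((M / Nat.gcd K M : ℕ) : ℤ) := by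
    rw [hl, hfrac, hMg, Int.floor_natCast]
  have h1 : (l:ℚ) = (M:ℚ)/(g:ℚ) := by
    rw [hl']
    exact_mod_cast hMg.symm
  refine ⟨h1, ?_⟩
  have hden2 : (N:ℚ) + ((l:ℚ)-1)*(Q-1) = (K:ℚ)/g := by
    rw [h1, hN]; ring
  rw [hden2, h1, div_div_div_cancel_right₀]
  exact hg0
end

section
/- Suppose 3 servers store subsets S₁,S₂,S₃ ⊆ {1,…,5} with |S_i| = 4 covering {1,…,5}, and nonnegative reals D₁,D₂,D₃ satisfy: for every k ∈ {1,…,5}, the sum of D_i over servers with k ∈ S_i is at least L > 0. Then D₁ + D₂ + D₃ ≥ 3L/2, hence the rate L/(D₁+D₂+D₃) ≤ 2/3. -/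
theorem pid_K5_M4_N3_converse
    (L : ℝ) (hL : 0 < L)
    (S : Fin 3 → Finset (Fin 5))
    (hcard : ∀ i, (S i).card = 4)
    (hcover : ∀ k : Fin 5, ∃ i, k ∈ S i)
    (D : Fin 3 → ℝ) (hD : ∀ i, 0 ≤ D i)
    (hdownload : ∀ k : Fin 5, L ≤ ∑ i ∈ Finset.univ.filter (fun i => k ∈ S i), D i) :
    3 * L / 2 ≤ ∑ i, D i ∧ L / (∑ i, D i) ≤ 2 / 3 := by
  have key : ∀ i : Fin 3, L ≤ (∑ j, D j) - D i := by
    intro i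
    have hex : ∃ k : Fin 5, k ∉ S i := by
      by_contra h
      push_neg at h
      have : (S i).card = 5 := by
        have : S i = Finset.univ := Finset.eq_univ_iff_forall.mpr h
        simp [this]
      have h4 := hcard i
      omega
    obtain ⟨k, hk⟩ := hex
    have h1 := hdownload k
    have hsub : Finset.univ.filter (fun j => k ∈ S j) ⊆ Finset.univ.erase i := by
      intro j hj
      simp only [Finset.mem_filter] at hj
      refine Finset.mem_erase.mpr ⟨?_, Finset.mem_univ _⟩
      rintro rfl; exact hk hj.2
    have h2 : ∑ j ∈ Finset.univ.filter (fun j => k ∈ S j), D j ≤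
        ∑ j ∈ Finset.univ.erase i, D j :=
      Finset.sum_le_sum_of_subset_of_nonneg hsub (fun j _ _ => hD j)
    have h3 : ∑ j ∈ Finset.univ.erase i, D j = (∑ j, D j) - D i := by
      rw [Finset.sum_erase_eq_sub (Finset.mem_univ i)]
    linarith
  have k0 := key 0
  have k1 := key 1
  have k2 := key 2
  simp only [Fin.sum_univ_three] at k0 k1 k2 ⊢
  have h1 : 3 * L / 2 ≤ D 0 + D 1 + D 2 := by linarith
  refine ⟨h1, ?_⟩
  have hpos : 0 < D 0 + D 1 + D 2 := lt_of_lt_of_le (by linarith) h1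
  rw [div_le_div_iff₀ hpos (by norm_num)]
  linarith
end
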